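/- With the channel H as in Lemma 1 and beams taken as steering vectors matched exactly to path ℓ₀ (i.e., θ̄_q = θ_{ℓ₀}, φ̄_p = φ_{ℓ₀}), and assuming for every other path ℓ that cos θ_ℓ ≠ cos θ_{ℓ₀} and cos φ_ℓ ≠ cos φ_{ℓ₀}, the average beam gain equals σ_{ℓ₀}² N_TX N_RX plus terms each bounded by σ_ℓ² / (N_TX N_RX sin²((π/2)Δ_{ℓ,q}) sin²((π/2)Δ_{ℓ,p})); in particular, the matched-path contribution alone equals σ_{ℓ₀}² N_TX N_RX. -/
import Mathlib


open Real Finset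

/-- Squared modulus `|L_N(Δ)|²` of the array gain function, extended by `N` at `Δ = 0`. -/
noncomputable def Lsq (N : ℕ) (Δ : ℝ) : ℝ :=
  if Δ = 0 then (N : ℝ)
  else (1 / (N : ℝ)) * (Real.sin ((Real.pi / 2) * N * Δ) ^ 2 / Real.sin ((Real.pi / 2) * Δ) ^ 2)

lemma Lsq_zero (N : ℕ) : Lsq N 0 = (N : ℝ) := by simp [Lsq]

lemma Lsq_nonneg (N : ℕ) (Δ : ℝ) : 0 ≤ Lsq N Δ := by
  unfold Lsq
  split <;> positivity

lemma Lsq_le (N : ℕ) (Δ : ℝ) (hΔ : Δ ≠ 0) :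
    Lsq N Δ ≤ 1 / ((N : ℝ) * Real.sin ((Real.pi / 2) * Δ) ^ 2) := by
  unfold Lsq
  rw [if_neg hΔ]
  rcases eq_or_ne (Real.sin ((Real.pi / 2) * Δ)) 0 with hs | hs
  · simp [hs]
  · have hs2 : 0 < Real.sin ((Real.pi / 2) * Δ) ^ 2 := by positivity
    rcases Nat.eq_zero_or_pos N with h0 | h0
    · simp [h0]
    have hN : (0:ℝ) < N := by exact_mod_cast h0
    have h1 : Real.sin ((Real.pi / 2) * N * Δ) ^ 2 ≤ 1 := by
      have := Real.neg_one_le_sin ((Real.pi / 2) * N * Δ)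
      have := Real.sin_le_one ((Real.pi / 2) * N * Δ)
      nlinarith
    calc (1 / (N : ℝ)) * (Real.sin ((Real.pi / 2) * N * Δ) ^ 2 / Real.sin ((Real.pi / 2) * Δ) ^ 2)
        ≤ (1 / (N : ℝ)) * (1 / Real.sin ((Real.pi / 2) * Δ) ^ 2) := by gcongr
      _ = 1 / ((N : ℝ) * Real.sin ((Real.pi / 2) * Δ) ^ 2) := by
          rw [div_mul_div_comm, one_mul]

theorem matched_beam_gain
    (NTX NRX : ℕ) (hNTX : 1 ≤ NTX) (hNRX : 1 ≤ NRX)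
    (L : ℕ) (σsq : Fin L → ℝ) (hσ : ∀ ℓ, 0 ≤ σsq ℓ)
    (θ φ : Fin L → ℝ) (ℓ₀ : Fin L)
    (hθ : ∀ ℓ, ℓ ≠ ℓ₀ → Real.cos (θ ℓ) ≠ Real.cos (θ ℓ₀))
    (hφ : ∀ ℓ, ℓ ≠ ℓ₀ → Real.cos (φ ℓ) ≠ Real.cos (φ ℓ₀)) :
    -- the average beam gain with beams matched exactly to path `ℓ₀`
    (∑ ℓ, σsq ℓ * Lsq NRX (Real.cos (θ ℓ) - Real.cos (θ ℓ₀)) *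
        Lsq NTX (Real.cos (φ ℓ₀) - Real.cos (φ ℓ))) =
      σsq ℓ₀ * (NTX : ℝ) * (NRX : ℝ) +
        ∑ ℓ ∈ Finset.univ \ {ℓ₀}, σsq ℓ * Lsq NRX (Real.cos (θ ℓ) - Real.cos (θ ℓ₀)) *
          Lsq NTX (Real.cos (φ ℓ₀) - Real.cos (φ ℓ)) ∧
    -- each mismatched-path term is bounded as claimed
    (∀ ℓ, ℓ ≠ ℓ₀ →
      σsq ℓ * Lsq NRX (Real.cos (θ ℓ) - Real.cos (θ ℓ₀)) *
          Lsq NTX (Real.cos (φ ℓ₀) - Real.cos (φ ℓ)) ≤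
        σsq ℓ / ((NTX : ℝ) * (NRX : ℝ) *
          Real.sin ((Real.pi / 2) * (Real.cos (θ ℓ) - Real.cos (θ ℓ₀))) ^ 2 *
          Real.sin ((Real.pi / 2) * (Real.cos (φ ℓ₀) - Real.cos (φ ℓ))) ^ 2)) ∧
    -- the matched-path contribution alone
    σsq ℓ₀ * Lsq NRX (Real.cos (θ ℓ₀) - Real.cos (θ ℓ₀)) *
        Lsq NTX (Real.cos (φ ℓ₀) - Real.cos (φ ℓ₀)) =
      σsq ℓ₀ * (NTX : ℝ) * (NRX : ℝ) := by
  have hmatch : σsq ℓ₀ * Lsq NRX (Real.cos (θ ℓ₀) - Real.cos (θ ℓ₀)) *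
      Lsq NTX (Real.cos (φ ℓ₀) - Real.cos (φ ℓ₀)) = σsq ℓ₀ * (NTX : ℝ) * (NRX : ℝ) := by
    simp only [sub_self, Lsq_zero]; ring
  refine ⟨?_, ?_, hmatch⟩
  · rw [Finset.sum_eq_sum_sdiff_singleton_add (Finset.mem_univ ℓ₀), hmatch, add_comm]
  · intro ℓ hℓ
    have hΔθ : Real.cos (θ ℓ) - Real.cos (θ ℓ₀) ≠ 0 := sub_ne_zero.mpr (hθ ℓ hℓ)
    have hΔφ : Real.cos (φ ℓ₀) - Real.cos (φ ℓ) ≠ 0 :=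
      fun h => hφ ℓ hℓ (sub_eq_zero.mp h).symm
    calc σsq ℓ * Lsq NRX (Real.cos (θ ℓ) - Real.cos (θ ℓ₀)) *
          Lsq NTX (Real.cos (φ ℓ₀) - Real.cos (φ ℓ))
        ≤ σsq ℓ * (1 / ((NRX : ℝ) *
            Real.sin ((Real.pi / 2) * (Real.cos (θ ℓ) - Real.cos (θ ℓ₀))) ^ 2)) *
          (1 / ((NTX : ℝ) *
            Real.sin ((Real.pi / 2) * (Real.cos (φ ℓ₀) - Real.cos (φ ℓ))) ^ 2)) := by
          have h1 := Lsq_le NRX _ hΔθ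
          have h2 := Lsq_le NTX _ hΔφ
          have n1 := Lsq_nonneg NRX (Real.cos (θ ℓ) - Real.cos (θ ℓ₀))
          have n2 := Lsq_nonneg NTX (Real.cos (φ ℓ₀) - Real.cos (φ ℓ))
          have h1' := mul_le_mul_of_nonneg_left h1 (hσ ℓ)
          exact mul_le_mul h1' h2 n2 (mul_nonneg (hσ ℓ) (by positivity))
      _ = σsq ℓ / ((NTX : ℝ) * (NRX : ℝ) *
            Real.sin ((Real.pi / 2) * (Real.cos (θ ℓ) - Real.cos (θ ℓ₀))) ^ 2 *
            Real.sin ((Real.pi / 2) * (Real.cos (φ ℓ₀) - Real.cos (φ ℓ))) ^ 2) := by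
          rw [one_div, one_div, div_eq_mul_inv]
          ring
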